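/- Let x and y be real numbers with e < x − y and 0 < y < x. Then π_M(x−y) − log log(x−y) − M ≤ ( π_M(x) − log log(x) − M ) + y/( (x−y)·log(x−y) ). In particular, if π_M(x) − log log x − M < −0.000154/(√x · log x) and 0 < y ≤ 0.00015·√x (with x large enough that log x > 200), then π_M(x−y) − log log(x−y) − M < 0. -/

import Mathlib

open scoped BigOperators

/-- The Mertens constant `M = C₀ - ∑_p ∑_{m≥2} 1/(m p^m)`. -/
noncomputable def mertensConstant : ℝ :=
  Real.eulerMascheroniConstant -
    ∑' p : Nat.Primes, ∑' m : ℕ, 1 / ((m + 2 : ℝ) * ((p : ℕ) : ℝ) ^ (m + 2))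

/-- `π_M(x) = ∑'_{p<x} 1/p`, the normalized Mertens prime-counting function
(boundary terms receive weight 1/2). -/
noncomputable def piM (x : ℝ) : ℝ :=
  (1/2) * ∑' p : Nat.Primes, (if ((p : ℕ) : ℝ) < x then 1 / ((p : ℕ) : ℝ) else 0)
  + (1/2) * ∑' p : Nat.Primes, (if ((p : ℕ) : ℝ) ≤ x then 1 / ((p : ℕ) : ℝ) else 0)

/-! Since `π_M` is monotone, passing from `x` to `x - y` can raise `π_M - log log - M` only
through the drop of `log log`, which `log t ≤ t - 1` (applied twice) bounds by
`y / ((x - y) log (x - y))`. When `y ≤ 0.00015 √x` and `log x > 200` this is at most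
`0.000154 / (√x log x)`, so the assumed negative margin at `x` absorbs it. -/

open Real

section PrimeSums

variable {P Q : ℝ → Prop} [DecidablePred P] [DecidablePred Q]

theorem summable_primes_ite_of_forall_le {x : ℝ} (hP : ∀ t, P t → t ≤ x) (f : Nat.Primes → ℝ) :
    Summable fun p : Nat.Primes => if P ((p : ℕ) : ℝ) then f p else 0 := by
  refine summable_of_ne_finset_zero (s := (Finset.range (⌈x⌉₊ + 1)).subtype Nat.Prime) ?_
  intro p hp
  rw [if_neg]
  intro hPp
  have hpx : (p : ℕ) ≤ ⌈x⌉₊ := by exact_mod_cast (hP _ hPp).trans (Nat.le_ceil x)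
  exact hp (Finset.mem_subtype.mpr (Finset.mem_range.mpr (Nat.lt_succ_of_le hpx)))

theorem tsum_primes_ite_le_tsum_primes_ite {x : ℝ} (hPQ : ∀ t, P t → Q t)
    (hQ : ∀ t, Q t → t ≤ x) {f : Nat.Primes → ℝ} (hf : ∀ p, 0 ≤ f p) :
    ∑' p : Nat.Primes, (if P ((p : ℕ) : ℝ) then f p else 0)
      ≤ ∑' p : Nat.Primes, (if Q ((p : ℕ) : ℝ) then f p else 0) := by
  refine Summable.tsum_le_tsum (fun p => ?_)
    (summable_primes_ite_of_forall_le (fun t ht => hQ t (hPQ t ht)) f)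
    (summable_primes_ite_of_forall_le hQ f)
  split_ifs with hp hq hq
  · exact le_rfl
  · exact absurd (hPQ _ hp) hq
  · exact hf p
  · exact le_rfl

end PrimeSums

theorem piM_mono : Monotone piM := by
  intro a b hab
  have hlt := tsum_primes_ite_le_tsum_primes_ite (P := (· < a)) (Q := (· < b))
    (x := b) (fun t ht => ht.trans_le hab) (fun t ht => ht.le)
    (f := fun p : Nat.Primes => 1 / ((p : ℕ) : ℝ)) (fun p => by positivity)
  have hle := tsum_primes_ite_le_tsum_primes_ite (P := (· ≤ a)) (Q := (· ≤ b))
    (x := b) (fun t ht => ht.trans hab) (fun t ht => ht)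
    (f := fun p : Nat.Primes => 1 / ((p : ℕ) : ℝ)) (fun p => by positivity)
  unfold piM
  linarith

theorem Real.log_sub_log_le_sub_div {a b : ℝ} (ha : 0 < a) (hb : 0 < b) :
    log a - log b ≤ (a - b) / b := by
  have h := log_le_sub_one_of_pos (div_pos ha hb)
  rwa [log_div ha.ne' hb.ne', div_sub_one hb.ne'] at h

theorem Real.log_log_sub_log_log_le {a b : ℝ} (ha : 1 < a) (hab : a ≤ b) :
    log (log b) - log (log a) ≤ (b - a) / (a * log a) := by
  have ha0 : 0 < a := one_pos.trans ha
  have hloga : 0 < log a := log_pos ha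
  calc log (log b) - log (log a) ≤ (log b - log a) / log a :=
        log_sub_log_le_sub_div (hloga.trans_le (log_le_log ha0 hab)) hloga
    _ ≤ (b - a) / a / log a :=
        div_le_div_of_nonneg_right (log_sub_log_le_sub_div (ha0.trans_le hab) ha0) hloga.le
    _ = (b - a) / (a * log a) := div_div _ _ _

theorem piM_sub_log_log_le {a b : ℝ} (ha : 1 < a) (hab : a ≤ b) :
    piM a - log (log a) ≤ piM b - log (log b) + (b - a) / (a * log a) := by
  linarith [piM_mono hab, log_log_sub_log_log_le ha hab]

theorem div_mul_log_sub_le_of_le_sqrt {x y : ℝ} (hlog : 200 < log x) (hy0 : 0 < y)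
    (hy : y ≤ 0.00015 * √x) :
    y / ((x - y) * log (x - y)) ≤ 0.000154 / (√x * log x) := by
  have hx0 : 0 < x := sqrt_pos.mp (by linarith)
  have hx1 : 1 ≤ x := (log_pos_iff hx0.le).mp (by linarith) |>.le
  have hsqrt : √x * √x = x := mul_self_sqrt hx0.le
  have hyx : y ≤ 0.00015 * x := hy.trans (by gcongr; exact sqrt_le_self_iff.mpr (Or.inr hx1))
  have hxy : 0.99 * x ≤ x - y := by linarith
  have hxy0 : 0 < x - y := by linarith
  have hlog_xy : 0.995 * log x ≤ log (x - y) := by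
    have h := log_sub_log_le_sub_div hx0 hxy0
    have hquot : (x - (x - y)) / (x - y) ≤ 1 := (div_le_one hxy0).mpr (by linarith)
    linarith
  have hxlog : 0 < x * log x := mul_pos hx0 (by linarith)
  rw [div_le_div_iff₀ (mul_pos hxy0 (by linarith)) (by positivity)]
  calc y * (√x * log x) ≤ 0.00015 * √x * (√x * log x) := by gcongr
    _ = 0.00015 * (x * log x) := by linear_combination 0.00015 * log x * hsqrt
    _ ≤ 0.000154 * (0.99 * x * (0.995 * log x)) := by nlinarith
    _ ≤ 0.000154 * ((x - y) * log (x - y)) := by gcongr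

theorem negativity_propagates_general
    (x y : ℝ) (hxy : Real.exp 1 < x - y) (hy0 : 0 < y) :
    (piM (x - y) - Real.log (Real.log (x - y)) - mertensConstant
        ≤ (piM x - Real.log (Real.log x) - mertensConstant)
          + y / ((x - y) * Real.log (x - y)))
    ∧ (200 < Real.log x →
        piM x - Real.log (Real.log x) - mertensConstant
          < -0.000154 / (Real.sqrt x * Real.log x) →
        y ≤ 0.00015 * Real.sqrt x →
        piM (x - y) - Real.log (Real.log (x - y)) - mertensConstant < 0) := by
  have hxy1 : 1 < x - y := one_lt_exp_iff.mpr one_pos |>.trans hxy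
  have hstep := piM_sub_log_log_le hxy1 (sub_le_self x hy0.le)
  rw [sub_sub_cancel] at hstep
  refine ⟨by linarith, fun hlog hneg hy => ?_⟩
  have hbound := div_mul_log_sub_le_of_le_sqrt hlog hy0 hy
  rw [neg_div] at hneg
  linarith

theorem negativity_propagates
    (x y : ℝ) (hxy : Real.exp 1 < x - y) (hy0 : 0 < y) (hyx : y < x) :
    (piM (x - y) - Real.log (Real.log (x - y)) - mertensConstant
        ≤ (piM x - Real.log (Real.log x) - mertensConstant)
          + y / ((x - y) * Real.log (x - y)))
    ∧ (200 < Real.log x →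
        piM x - Real.log (Real.log x) - mertensConstant
          < -0.000154 / (Real.sqrt x * Real.log x) →
        y ≤ 0.00015 * Real.sqrt x →
        piM (x - y) - Real.log (Real.log (x - y)) - mertensConstant < 0) :=
  negativity_propagates_general x y hxy hy0
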